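/- Let f : ℂⁿ → ℂ be an ℝ-linear map with f = a' + a'', a' being ℂ-linear, a'' being ℂ-antilinear, and ‖a''‖ < ‖a'‖ (operator norms). Then the kernel of f, viewed as a real subspace of ℂⁿ, is a symplectic subspace with respect to the standard symplectic form ω(u,v) = Re⟨iu, v⟩ on ℂⁿ; that is, the restriction of ω to ker f is a nondegenerate bilinear form. -/

import Mathlib

/-!
By Riesz representation, `a' = ⟪w, ·⟫` and `a'' = ⟪·, w''⟫` with `‖w‖ = ‖a'‖`, `‖w''‖ = ‖a''‖`.
If `u ∈ ker f` is `ω`-orthogonal to `ker f`, the real functional `Re ⟪I • u, ·⟫` vanishes on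
`ker f`, hence equals `Re (c̄ f)` for some `c : ℂ`; this forces `I • u = c • w + c̄ • w''`.
Substituting back, `f u = -I c (‖w‖² - ‖w''‖²)`, so `f u = 0` gives `c = 0` and `u = 0`.
-/

open Complex LinearMap
open scoped InnerProductSpace ComplexConjugate

theorem exists_re_conj_mul_of_ker_le {V : Type*} [AddCommGroup V] [Module ℝ V]
    {f : V →ₗ[ℝ] ℂ} {g : V →ₗ[ℝ] ℝ} (h : ker f ≤ ker g) :
    ∃ c : ℂ, ∀ v, g v = (conj c * f v).re := by
  have hker : ⨅ i, ker (![reLm.comp f, imLm.comp f] i) ≤ ker g := by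
    intro v hv
    simp only [Submodule.mem_iInf, Fin.forall_fin_two, mem_ker] at hv
    exact h (Complex.ext hv.1 hv.2)
  obtain ⟨c, hc⟩ :=
    (Submodule.mem_span_range_iff_exists_fun ℝ).1 (mem_span_of_iInf_ker_le_ker hker)
  refine ⟨⟨c 0, c 1⟩, fun v => ?_⟩
  rw [← hc]
  simp [Fin.sum_univ_two]

section InnerProductSpace

variable {E : Type*} [NormedAddCommGroup E] [InnerProductSpace ℂ E]

theorem exists_norm_eq_and_eq_inner_right_of_antilinear [CompleteSpace E] (a : E →L[ℝ] ℂ)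
    (ha : ∀ (c : ℂ) v, a (c • v) = conj c * a v) :
    ∃ w : E, ‖w‖ = ‖a‖ ∧ ∀ v, a v = ⟪v, w⟫_ℂ := by
  let b : E →L[ℂ] ℂ :=
    { toFun := fun v => conj (a v)
      map_add' := fun x y => by simp
      map_smul' := fun c v => by simp [ha]
      cont := Complex.continuous_conj.comp a.continuous }
  refine ⟨(InnerProductSpace.toDual ℂ E).symm b, ?_, fun v => ?_⟩
  · rw [LinearIsometryEquiv.norm_map, ← ContinuousLinearMap.norm_restrictScalars (𝕜' := ℝ)]
    exact ContinuousLinearMap.opNorm_ext _ _ fun v => Complex.norm_conj _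
  · rw [← inner_conj_symm, InnerProductSpace.toDual_symm_apply]
    simp [b]

theorem eq_of_forall_re_inner_eq {x y : E} (h : ∀ v, re ⟪x, v⟫_ℂ = re ⟪y, v⟫_ℂ) : x = y := by
  rw [← sub_eq_zero, ← re_inner_self_nonpos (𝕜 := ℂ), inner_sub_left, map_sub]
  exact (sub_eq_zero.2 (h _)).le

theorem inner_add_inner_neg_I_smul (w w'' : E) (c : ℂ) :
    ⟪w, -I • (c • w + conj c • w'')⟫_ℂ + ⟪-I • (c • w + conj c • w''), w''⟫_ℂ
      = -I * c * ((‖w‖ ^ 2 - ‖w''‖ ^ 2 : ℝ) : ℂ) := by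
  simp only [inner_smul_right, inner_smul_left, inner_add_left, inner_add_right,
    inner_self_eq_norm_sq_to_K, coe_algebraMap, map_neg, conj_I, neg_neg, conj_conj,
    ofReal_sub, ofReal_pow]
  ring

theorem eq_zero_of_forall_re_inner_I_smul_eq_zero {f : E →ₗ[ℝ] ℂ} {w w'' u : E}
    (hf : ∀ v, f v = ⟪w, v⟫_ℂ + ⟪v, w''⟫_ℂ) (hnorm : ‖w''‖ ≠ ‖w‖) (hu : f u = 0)
    (hω : ∀ v, f v = 0 → re ⟪I • u, v⟫_ℂ = 0) : u = 0 := by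
  obtain ⟨c, hc⟩ := exists_re_conj_mul_of_ker_le (f := f)
    (g := reLm.comp ((innerₛₗ ℂ (I • u)).restrictScalars ℝ)) fun v hv => hω v hv
  have hIu : I • u = c • w + conj c • w'' := eq_of_forall_re_inner_eq fun v => by
    refine (hc v).trans ?_
    rw [hf, inner_add_left, inner_smul_left, inner_smul_left, conj_conj, ← inner_conj_symm v w'',
      mul_add, add_re, add_re, ← map_mul, conj_re]
  have hne : ((‖w‖ ^ 2 - ‖w''‖ ^ 2 : ℝ) : ℂ) ≠ 0 := by
    rw [ofReal_ne_zero, sub_ne_zero]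
    exact hnorm.symm ∘ (pow_left_inj₀ (norm_nonneg _) (norm_nonneg _) two_ne_zero).1
  have hc0 : c = 0 := by
    have h := inner_add_inner_neg_I_smul w w'' c
    rw [← hIu, ← hf, smul_smul, neg_mul, I_mul_I, neg_neg, one_smul, hu] at h
    simpa only [mul_eq_zero, neg_eq_zero, I_ne_zero, hne, false_or, or_false] using h.symm
  simpa [hc0] using hIu

end InnerProductSpace

theorem ker_symplectic_of_antilinear_part_small_general (n : ℕ)
    (f : EuclideanSpace ℂ (Fin n) →L[ℝ] ℂ)
    (a' : EuclideanSpace ℂ (Fin n) →L[ℂ] ℂ)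
    (a'' : EuclideanSpace ℂ (Fin n) →L[ℝ] ℂ)
    (hanti : ∀ (c : ℂ) (v : EuclideanSpace ℂ (Fin n)),
      a'' (c • v) = (starRingEnd ℂ) c * a'' v)
    (hsum : ∀ v, f v = a' v + a'' v)
    (hnorm : ‖a''‖ < ‖a'‖) :
    ∀ u : EuclideanSpace ℂ (Fin n), f u = 0 →
      (∀ v : EuclideanSpace ℂ (Fin n), f v = 0 →
        (inner ℂ (Complex.I • u) v : ℂ).re = 0) → u = 0 := by
  intro u hu hω
  obtain ⟨w'', hw''_norm, hw''⟩ := exists_norm_eq_and_eq_inner_right_of_antilinear a'' hanti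
  set w := (InnerProductSpace.toDual ℂ (EuclideanSpace ℂ (Fin n))).symm a'
  have hf : ∀ v, f v = ⟪w, v⟫_ℂ + ⟪v, w''⟫_ℂ := fun v => by
    rw [hsum, hw'', InnerProductSpace.toDual_symm_apply]
  have hw_norm : ‖w''‖ ≠ ‖w‖ := by
    rw [hw''_norm, LinearIsometryEquiv.norm_map]
    exact hnorm.ne
  exact eq_zero_of_forall_re_inner_I_smul_eq_zero (f := f.toLinearMap) hf hw_norm hu hω

/-- If `f = a' + a''` with `a'` complex-linear, `a''` conjugate-linear and
`‖a''‖ < ‖a'‖`, then `ker f` is a symplectic subspace of `ℂⁿ` for the standard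
symplectic form `ω(u,v) = Re ⟪i•u, v⟫`. -/
theorem ker_symplectic_of_antilinear_part_small (n : ℕ) (hn : 1 ≤ n)
    (f : EuclideanSpace ℂ (Fin n) →L[ℝ] ℂ)
    (a' : EuclideanSpace ℂ (Fin n) →L[ℂ] ℂ)
    (a'' : EuclideanSpace ℂ (Fin n) →L[ℝ] ℂ)
    (hanti : ∀ (c : ℂ) (v : EuclideanSpace ℂ (Fin n)),
      a'' (c • v) = (starRingEnd ℂ) c * a'' v)
    (hsum : ∀ v, f v = a' v + a'' v)
    (hnorm : ‖a''‖ < ‖a'‖) :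
    ∀ u : EuclideanSpace ℂ (Fin n), f u = 0 →
      (∀ v : EuclideanSpace ℂ (Fin n), f v = 0 →
        (inner ℂ (Complex.I • u) v : ℂ).re = 0) → u = 0 :=
  ker_symplectic_of_antilinear_part_small_general n f a' a'' hanti hsum hnorm
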